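/- Let C be a capacity-wise lexicographic choice rule such that for each q ∈ {2,...,n}, the priority list for capacity q is obtained by insertion from the priority list for capacity q-1. Then C is monotonic: C(S,q) ⊆ C(S,q+1) for all S and q < n. -/
import Mathlib


open Finset

variable {α : Type*} [Fintype α] [DecidableEq α]

/-- The set of rejected alternatives `R(S,q) = S \ C(S,q)`. -/
def Rej (C : Finset α → ℕ → Finset α) (S : Finset α) (q : ℕ) : Finset α := S \ C S q

/-- A capacity-constrained choice rule chooses a subset of `S` of cardinality at most `q`. -/
def ValidRule (C : Finset α → ℕ → Finset α) : Prop :=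
  ∀ S : Finset α, ∀ q : ℕ, S.Nonempty → 1 ≤ q → q ≤ Fintype.card α →
    C S q ⊆ S ∧ (C S q).card ≤ q

/-- Capacity-filling: `|C(S,q)| = min {|S|, q}`. -/
def CapacityFilling (C : Finset α → ℕ → Finset α) : Prop :=
  ∀ S : Finset α, ∀ q : ℕ, S.Nonempty → 1 ≤ q → q ≤ Fintype.card α →
    (C S q).card = min S.card q

/-- Monotonicity: `C(S,q) ⊆ C(S,q+1)`. -/
def ChoiceMonotone (C : Finset α → ℕ → Finset α) : Prop :=
  ∀ S : Finset α, ∀ q : ℕ, S.Nonempty → 1 ≤ q → q < Fintype.card α →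
    C S q ⊆ C S (q + 1)

/-- Gross substitutes: if `a ∈ C(S,q)` then `a ∈ C(S \ {b}, q)` for `b ≠ a`. -/
def GrossSubstitutes (C : Finset α → ℕ → Finset α) : Prop :=
  ∀ S : Finset α, ∀ q : ℕ, ∀ a b : α, S.Nonempty → 1 ≤ q → q ≤ Fintype.card α →
    a ∈ S → b ∈ S → a ≠ b → a ∈ C S q → a ∈ C (S.erase b) q

/-- Irrelevance of accepted alternatives. -/
def IrrelevanceOfAcceptedAlternatives (C : Finset α → ℕ → Finset α) : Prop :=
  ∀ S S' : Finset α, ∀ q : ℕ, S.Nonempty → S'.Nonempty → 1 ≤ q → q < Fintype.card α →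
    Rej C S q = Rej C S' q →
    C S (q + 1) ∩ Rej C S q = C S' (q + 1) ∩ Rej C S' q

/-- `a` is revealed preferred to `b` at capacity `q`. -/
def RevealedPref (C : Finset α → ℕ → Finset α) (q : ℕ) (a b : α) : Prop :=
  ∃ S : Finset α, S.Nonempty ∧ a ∉ C S (q - 1) ∧ b ∉ C S (q - 1) ∧
    a ∈ C S q ∧ b ∈ Rej C S q

/-- Capacity-wise weak axiom of revealed preference. -/
def CWARP (C : Finset α → ℕ → Finset α) : Prop :=
  ∀ q : ℕ, 1 < q → q ≤ Fintype.card α →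
    ∀ a b : α, RevealedPref C q a b → ¬ RevealedPref C q b a

/-- Lexicographic choice: iteratively pick, for `i = 1, …, q`, the `π i`-maximal
remaining alternative of `S`, stopping when none remain. -/
def lexChoice (π : ℕ → LinearOrder α) (S : Finset α) : ℕ → Finset α
  | 0 => ∅
  | q + 1 =>
      let T := lexChoice π S q
      if h : (S \ T).Nonempty then insert (@Finset.max' α (π q) (S \ T) h) T else T

/-- `C` is (capacity-constrained) lexicographic for the priority profile `π`. -/
def IsLexFor (C : Finset α → ℕ → Finset α) (π : ℕ → LinearOrder α) : Prop :=
  ∀ S : Finset α, ∀ q : ℕ, S.Nonempty → 1 ≤ q → q ≤ Fintype.card α →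
    C S q = lexChoice π S q

/-- `C` is (capacity-constrained) lexicographic. -/
def IsLex (C : Finset α → ℕ → Finset α) : Prop :=
  ∃ π : ℕ → LinearOrder α, IsLexFor C π

/-- `π'` (a list of `q+1` orders) is obtained by insertion from `π` (a list of `q` orders). -/
def Insertion (q : ℕ) (π π' : ℕ → LinearOrder α) : Prop :=
  ∃ k ≤ q, (∀ l : ℕ, l < k → π' l = π l) ∧ ∀ l : ℕ, k < l → l ≤ q → π' l = π (l - 1)

/-- One step of lexicographic choice. -/
def lexStep (o : LinearOrder α) (S T : Finset α) : Finset α :=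
  if h : (S \ T).Nonempty then insert (@Finset.max' α o (S \ T) h) T else T

lemma lexChoice_succ (π : ℕ → LinearOrder α) (S : Finset α) (q : ℕ) :
    lexChoice π S (q + 1) = lexStep (π q) S (lexChoice π S q) := rfl

lemma subset_lexStep (o : LinearOrder α) (S T : Finset α) : T ⊆ lexStep o S T := by
  unfold lexStep; split
  · exact subset_insert _ _
  · exact subset_rfl

lemma lexStep_sdiff_card (o : LinearOrder α) (S T : Finset α) :
    (lexStep o S T \ T).card ≤ 1 := by
  unfold lexStep; split
  · exact le_trans (card_le_card (by
      intro y hy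
      simp only [mem_sdiff, mem_insert] at hy
      rcases hy.1 with rfl | hyT
      · exact mem_singleton_self _
      · exact absurd hyT hy.2)) (by simp)
  · simp

lemma lexChoice_subset (π : ℕ → LinearOrder α) (S : Finset α) (q : ℕ) :
    lexChoice π S q ⊆ S := by
  induction q with
  | zero => simp [lexChoice]
  | succ q ih =>
    rw [lexChoice_succ]
    unfold lexStep
    split
    · next hne =>
      exact insert_subset (mem_sdiff.mp (@Finset.max'_mem α (π q) _ hne)).1 ih
    · exact ih

lemma lexChoice_congr (π ρ : ℕ → LinearOrder α) (S : Finset α) (m : ℕ)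
    (hagree : ∀ l, l < m → π l = ρ l) :
    lexChoice π S m = lexChoice ρ S m := by
  induction m with
  | zero => rfl
  | succ m ih =>
    rw [lexChoice_succ, lexChoice_succ, ih (fun l hl => hagree l (by omega)),
      hagree m (by omega)]

lemma lexStep_mono (o : LinearOrder α) (S T T' : Finset α)
    (hTT' : T ⊆ T') (hT'S : T' ⊆ S) (hcard : (T' \ T).card ≤ 1) :
    lexStep o S T ⊆ lexStep o S T' ∧ (lexStep o S T' \ lexStep o S T).card ≤ 1 := by
  letI := o
  rcases (T' \ T).eq_empty_or_nonempty with hd | hd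
  · have hT'T : T' ⊆ T := by
      intro y hy
      by_contra hyT
      exact absurd (mem_sdiff.mpr ⟨hy, hyT⟩) (by simp [hd])
    have : T' = T := Subset.antisymm hT'T hTT'
    subst this
    exact ⟨subset_rfl, by simp⟩
  · obtain ⟨x, hx⟩ := hd
    have hxT' : x ∈ T' := (mem_sdiff.mp hx).1
    have hxT : x ∉ T := (mem_sdiff.mp hx).2
    have hdx : T' \ T = {x} := by
      apply Subset.antisymm
      · intro y hy
        have := Finset.card_le_one.mp hcard y hy x hx
        simp [this]
      · simp [hx]
    have hT'eq : T' = insert x T := by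
      apply Subset.antisymm
      · intro y hy
        by_cases hyT : y ∈ T
        · exact mem_insert_of_mem hyT
        · have : y ∈ T' \ T := mem_sdiff.mpr ⟨hy, hyT⟩
          rw [hdx] at this
          simp only [mem_singleton] at this
          simp [this]
      · exact insert_subset hxT' hTT'
    unfold lexStep
    by_cases h1 : (S \ T).Nonempty
    · have hsub : S \ T' ⊆ S \ T := sdiff_subset_sdiff subset_rfl hTT'
      by_cases h2 : (S \ T').Nonempty
      · rw [dif_pos h1, dif_pos h2]
        set a := (S \ T).max' h1 with ha
        set a' := (S \ T').max' h2 with ha'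
        by_cases hax : a = x
        · constructor
          · rw [hax]
            intro y hy
            rcases mem_insert.mp hy with rfl | hyT
            · exact mem_insert_of_mem hxT'
            · exact mem_insert_of_mem (hTT' hyT)
          · rw [hax]
            calc (insert a' T' \ insert x T).card
                ≤ (insert a' T' \ T').card := by
                  apply card_le_card
                  apply sdiff_subset_sdiff subset_rfl
                  rw [hT'eq]
              _ ≤ 1 := by
                  apply le_trans (card_le_card (fun y hy => ?_)) (card_singleton a').le
                  simp only [mem_sdiff, mem_insert] at hy
                  rcases hy.1 with rfl | hyT'
                  · exact mem_singleton_self _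
                  · exact absurd hyT' hy.2
        · have haS : a ∈ S \ T := (S \ T).max'_mem h1
          have haT' : a ∈ S \ T' := by
            rw [hT'eq]
            simp only [mem_sdiff, mem_insert] at haS ⊢
            exact ⟨haS.1, fun hc => hc.elim hax haS.2⟩
          have heq : a' = a := le_antisymm ((S \ T).le_max' a' (hsub ((S \ T').max'_mem h2)))
            ((S \ T').le_max' a haT')
          rw [heq]
          constructor
          · exact insert_subset_insert _ hTT'
          · calc (insert a T' \ insert a T).card
                ≤ (T' \ T).card := by
                  apply card_le_card
                  intro y hy
                  simp only [mem_sdiff, mem_insert, not_or] at hy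
                  exact mem_sdiff.mpr ⟨hy.1.resolve_left hy.2.1, hy.2.2⟩
              _ ≤ 1 := hcard
      · rw [dif_pos h1, dif_neg h2]
        have hST' : S ⊆ T' := by
          intro y hy
          by_contra hyT'
          exact h2 ⟨y, mem_sdiff.mpr ⟨hy, hyT'⟩⟩
        constructor
        · exact insert_subset (hST' (mem_sdiff.mp ((S \ T).max'_mem h1)).1)
            (hTT'.trans subset_rfl)
        · calc (T' \ insert ((S \ T).max' h1) T).card
              ≤ (T' \ T).card := card_le_card (sdiff_subset_sdiff subset_rfl (subset_insert _ _))
            _ ≤ 1 := hcard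
    · have h2 : ¬ (S \ T').Nonempty := fun hc =>
        h1 (hc.mono (sdiff_subset_sdiff subset_rfl hTT'))
      rw [dif_neg h1, dif_neg h2]
      exact ⟨hTT', hcard⟩

theorem insertion_implies_monotone [Nonempty α] (L : ℕ → ℕ → LinearOrder α)
    (h : ∀ q : ℕ, 1 ≤ q → q < Fintype.card α → Insertion q (L q) (L (q + 1))) :
    ChoiceMonotone (fun S q => lexChoice (L q) S q) := by
  intro S q hS hq hqc
  obtain ⟨k, hkq, hlt, hgt⟩ := h q hq hqc
  set π := L q with hπ
  set π' := L (q + 1) with hπ'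
  have key : ∀ j, k + j ≤ q →
      lexChoice π S (k + j) ⊆ lexChoice π' S (k + j + 1) ∧
      (lexChoice π' S (k + j + 1) \ lexChoice π S (k + j)).card ≤ 1 := by
    intro j
    induction j with
    | zero =>
      intro _
      have he : lexChoice π' S k = lexChoice π S k :=
        lexChoice_congr π' π S k (fun l hl => hlt l hl)
      rw [Nat.add_zero, lexChoice_succ, he]
      exact ⟨subset_lexStep _ _ _, lexStep_sdiff_card _ _ _⟩
    | succ j ih =>
      intro hle
      have prev := ih (by omega)
      have hord : π' (k + j + 1) = π (k + j) := by
        have := hgt (k + j + 1) (by omega) (by omega)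
        simpa using this
      have step := lexStep_mono (π (k + j)) S (lexChoice π S (k + j))
        (lexChoice π' S (k + j + 1)) prev.1 (lexChoice_subset π' S _) prev.2
      have e1 : lexChoice π S (k + j + 1) = lexStep (π (k + j)) S (lexChoice π S (k + j)) :=
        lexChoice_succ π S (k + j)
      have e2 : lexChoice π' S (k + j + 1 + 1) =
          lexStep (π (k + j)) S (lexChoice π' S (k + j + 1)) := by
        rw [lexChoice_succ, hord]
      constructor
      · rw [show k + (j + 1) = k + j + 1 by ring, e1, e2]
        exact step.1
      · rw [show k + (j + 1) = k + j + 1 by ring, e1, e2]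
        exact step.2
  have hfin := key (q - k) (by omega)
  have : k + (q - k) = q := by omega
  rw [this] at hfin
  exact hfin.1
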